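/- For the Hessian manifold on the polytope {x : Ax > b} induced by the logarithmic barrier, the Riemann curvature tensor satisfies ⟨R(u,v)w, z⟩ = (s_u s_w)ᵀ P (s_v s_z) − (s_u s_z)ᵀ P (s_v s_w) for all u, v, w, z ∈ ℝⁿ, where s_u = S_x⁻¹ A u, products s_u s_w are entrywise, and P = A_x(A_xᵀA_x)⁻¹A_xᵀ with A_x = S_x⁻¹A, S_x = diag(Ax−b). -/

import Mathlib

/-- Slack vector `s_x = Ax − b`. -/
noncomputable def slack {m n : ℕ} (A : Matrix (Fin m) (Fin n) ℝ) (b : Fin m → ℝ)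
    (x : Fin n → ℝ) : Fin m → ℝ :=
  fun i => A.mulVec x i - b i

/-- Rescaled matrix `A_x = S_x⁻¹ A`. -/
noncomputable def Ascaled {m n : ℕ} (A : Matrix (Fin m) (Fin n) ℝ) (b : Fin m → ℝ)
    (x : Fin n → ℝ) : Matrix (Fin m) (Fin n) ℝ :=
  Matrix.of fun i j => A i j / slack A b x i

/-- The log-barrier Hessian metric `g(x) = A_xᵀ A_x`. -/
noncomputable def gmat {m n : ℕ} (A : Matrix (Fin m) (Fin n) ℝ) (b : Fin m → ℝ)
    (x : Fin n → ℝ) : Matrix (Fin n) (Fin n) ℝ :=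
  (Ascaled A b x).transpose * Ascaled A b x

/-- Projection matrix `P = A_x (A_xᵀ A_x)⁻¹ A_xᵀ`. -/
noncomputable def Pmat {m n : ℕ} (A : Matrix (Fin m) (Fin n) ℝ) (b : Fin m → ℝ)
    (x : Fin n → ℝ) : Matrix (Fin m) (Fin m) ℝ :=
  Ascaled A b x * (gmat A b x)⁻¹ * (Ascaled A b x).transpose

/-- Third derivative tensor of the log barrier. -/
noncomputable def phi3 {m n : ℕ} (A : Matrix (Fin m) (Fin n) ℝ) (b : Fin m → ℝ)
    (x : Fin n → ℝ) (i j k : Fin n) : ℝ :=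
  -2 * ∑ l, Ascaled A b x l i * Ascaled A b x l j * Ascaled A b x l k

/-- Riemann curvature tensor components
`R_{klij} = (1/4)∑_{pq} g^{pq}(φ_{jkp}φ_{ilq} − φ_{ikp}φ_{jlq})`. -/
noncomputable def Rtensor {m n : ℕ} (A : Matrix (Fin m) (Fin n) ℝ) (b : Fin m → ℝ)
    (x : Fin n → ℝ) (k l i j : Fin n) : ℝ :=
  (1/4) * ∑ p, ∑ q, (gmat A b x)⁻¹ p q *
    (phi3 A b x j k p * phi3 A b x i l q - phi3 A b x i k p * phi3 A b x j l q)

section Aux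

lemma swap1 {α β : Type*} [Fintype α] [Fintype β] (f : α → β → ℝ) :
    ∑ a, ∑ b, f a b = ∑ b, ∑ a, f a b := Finset.sum_comm

lemma swap2 {γ α β : Type*} [Fintype γ] [Fintype α] [Fintype β] (f : γ → α → β → ℝ) :
    ∑ c, ∑ a, ∑ b, f c a b = ∑ c, ∑ b, ∑ a, f c a b :=
  Finset.sum_congr rfl fun _ _ => Finset.sum_comm

lemma swap3 {δ γ α β : Type*} [Fintype δ] [Fintype γ] [Fintype α] [Fintype β]
    (f : δ → γ → α → β → ℝ) :
    ∑ d, ∑ c, ∑ a, ∑ b, f d c a b = ∑ d, ∑ c, ∑ b, ∑ a, f d c a b :=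
  Finset.sum_congr rfl fun _ _ => swap2 _

lemma swap4 {ε δ γ α β : Type*} [Fintype ε] [Fintype δ] [Fintype γ] [Fintype α] [Fintype β]
    (f : ε → δ → γ → α → β → ℝ) :
    ∑ e, ∑ d, ∑ c, ∑ a, ∑ b, f e d c a b = ∑ e, ∑ d, ∑ c, ∑ b, ∑ a, f e d c a b :=
  Finset.sum_congr rfl fun _ _ => swap3 _

lemma swap5 {ζ ε δ γ α β : Type*} [Fintype ζ] [Fintype ε] [Fintype δ] [Fintype γ] [Fintype α]
    [Fintype β] (f : ζ → ε → δ → γ → α → β → ℝ) :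
    ∑ x, ∑ e, ∑ d, ∑ c, ∑ a, ∑ b, f x e d c a b = ∑ x, ∑ e, ∑ d, ∑ c, ∑ b, ∑ a, f x e d c a b :=
  Finset.sum_congr rfl fun _ _ => swap4 _

lemma contract {n m : ℕ} (B : Matrix (Fin m) (Fin n) ℝ) (c d : Fin n → ℝ) (p : Fin n) :
    ∑ k : Fin n, ∑ j : Fin n, (-2 * ∑ a, B a j * B a k * B a p) * (c j * d k)
      = -2 * ∑ a, B a p * (B.mulVec c a * B.mulVec d a) := by
  simp only [Matrix.mulVec, dotProduct, Finset.mul_sum, Finset.sum_mul, neg_mul]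
  rw [swap2, swap1]
  refine Finset.sum_congr rfl fun a _ => Finset.sum_congr rfl fun k _ =>
    Finset.sum_congr rfl fun j _ => by ring

lemma sep {n : ℕ} (g : ℝ) (F1 F2 : Fin n → Fin n → ℝ) :
    ∑ k : Fin n, ∑ l : Fin n, ∑ i : Fin n, ∑ j : Fin n, g * (F1 j k * F2 i l)
      = g * ((∑ k, ∑ j, F1 j k) * (∑ l, ∑ i, F2 i l)) := by
  simp only [← Finset.mul_sum, ← Finset.sum_mul]

lemma half {n m : ℕ} (B : Matrix (Fin m) (Fin n) ℝ) (G : Matrix (Fin n) (Fin n) ℝ)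
    (c d e f : Fin n → ℝ) :
    ∑ k : Fin n, ∑ l : Fin n, ∑ i : Fin n, ∑ j : Fin n,
      (∑ p, ∑ q, G p q * ((-2 * ∑ a, B a j * B a k * B a p) * (-2 * ∑ a, B a i * B a l * B a q)))
        * c i * d j * e l * f k
    = 4 * ∑ p, ∑ q, G p q * (∑ a, B a p * (B.mulVec d a * B.mulVec f a))
        * (∑ b, B b q * (B.mulVec c b * B.mulVec e b)) := by
  conv_lhs => simp only [Finset.sum_mul]
  rw [swap4, swap3, swap2, swap1, swap5, swap4, swap3, swap2]
  have key : ∀ p q : Fin n,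
      ∑ k : Fin n, ∑ l : Fin n, ∑ i : Fin n, ∑ j : Fin n,
        G p q * ((-2 * ∑ a, B a j * B a k * B a p) * (-2 * ∑ a, B a i * B a l * B a q))
          * c i * d j * e l * f k
      = 4 * (G p q * (∑ a, B a p * (B.mulVec d a * B.mulVec f a))
          * (∑ b, B b q * (B.mulVec c b * B.mulVec e b))) := by
    intro p q
    calc ∑ k : Fin n, ∑ l : Fin n, ∑ i : Fin n, ∑ j : Fin n,
          G p q * ((-2 * ∑ a, B a j * B a k * B a p) * (-2 * ∑ a, B a i * B a l * B a q))
            * c i * d j * e l * f k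
        = ∑ k : Fin n, ∑ l : Fin n, ∑ i : Fin n, ∑ j : Fin n,
          G p q * (((-2 * ∑ a, B a j * B a k * B a p) * (d j * f k))
            * ((-2 * ∑ a, B a i * B a l * B a q) * (c i * e l))) :=
          Finset.sum_congr rfl fun k _ => Finset.sum_congr rfl fun l _ =>
            Finset.sum_congr rfl fun i _ => Finset.sum_congr rfl fun j _ => by ring
      _ = G p q * ((∑ k : Fin n, ∑ j : Fin n, (-2 * ∑ a, B a j * B a k * B a p) * (d j * f k))
            * (∑ l : Fin n, ∑ i : Fin n, (-2 * ∑ a, B a i * B a l * B a q) * (c i * e l))) :=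
          sep _ _ _
      _ = G p q * ((-2 * ∑ a, B a p * (B.mulVec d a * B.mulVec f a))
            * (-2 * ∑ b, B b q * (B.mulVec c b * B.mulVec e b))) := by
          rw [contract, contract]
      _ = 4 * (G p q * (∑ a, B a p * (B.mulVec d a * B.mulVec f a))
            * (∑ b, B b q * (B.mulVec c b * B.mulVec e b))) := by ring
  rw [Finset.sum_congr rfl fun p _ => Finset.sum_congr rfl fun q _ => key p q]
  simp only [← Finset.mul_sum]

lemma dotP {n m : ℕ} (B : Matrix (Fin m) (Fin n) ℝ) (G : Matrix (Fin n) (Fin n) ℝ)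
    (c e : Fin m → ℝ) :
    dotProduct c ((B * G * B.transpose).mulVec e)
      = ∑ p, ∑ q, G p q * (∑ a, B a p * c a) * (∑ b, B b q * e b) := by
  simp only [dotProduct, Matrix.mulVec, Matrix.mul_apply, Matrix.transpose_apply,
    Finset.sum_mul, Finset.mul_sum]
  rw [swap3, swap2, swap1, swap3, swap2, swap3]
  refine Finset.sum_congr rfl fun p _ => Finset.sum_congr rfl fun q _ =>
    Finset.sum_congr rfl fun b _ => Finset.sum_congr rfl fun a _ => by ring

end Aux

/-- Riemann curvature tensor of the log-barrier Hessian manifold: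
`⟨R(u,v)w, z⟩ = (s_u s_w)ᵀ P (s_v s_z) − (s_u s_z)ᵀ P (s_v s_w)`. -/
theorem riemann_tensor_log_barrier {m n : ℕ} (A : Matrix (Fin m) (Fin n) ℝ)
    (b : Fin m → ℝ) (x : Fin n → ℝ) (hrank : A.rank = n)
    (hx : ∀ i, b i < A.mulVec x i) (u v w z : Fin n → ℝ) :
    (∑ k, ∑ l, ∑ i, ∑ j, Rtensor A b x k l i j * u i * v j * w l * z k) =
      dotProduct
        (fun i => (Ascaled A b x).mulVec u i * (Ascaled A b x).mulVec w i)
        ((Pmat A b x).mulVec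
          (fun i => (Ascaled A b x).mulVec v i * (Ascaled A b x).mulVec z i))
      - dotProduct
        (fun i => (Ascaled A b x).mulVec u i * (Ascaled A b x).mulVec z i)
        ((Pmat A b x).mulVec
          (fun i => (Ascaled A b x).mulVec v i * (Ascaled A b x).mulVec w i)) := by

  have hgt : (gmat A b x).transpose = gmat A b x := by
    simp [gmat, Matrix.transpose_mul]
  have hG : ∀ p q, (gmat A b x)⁻¹ p q = (gmat A b x)⁻¹ q p := by
    intro p q
    calc (gmat A b x)⁻¹ p q = ((gmat A b x)⁻¹).transpose q p := rfl
      _ = ((gmat A b x).transpose)⁻¹ q p := by rw [Matrix.transpose_nonsing_inv]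
      _ = (gmat A b x)⁻¹ q p := by rw [hgt]
  -- rewrite the right-hand side via dotP
  simp only [Pmat, dotP]
  -- symmetry swap on the first RHS term
  have hsw : ∑ p, ∑ q, (gmat A b x)⁻¹ p q
        * (∑ a, Ascaled A b x a p
            * ((Ascaled A b x).mulVec u a * (Ascaled A b x).mulVec w a))
        * (∑ b', Ascaled A b x b' q
            * ((Ascaled A b x).mulVec v b' * (Ascaled A b x).mulVec z b'))
      = ∑ p, ∑ q, (gmat A b x)⁻¹ p q
        * (∑ a, Ascaled A b x a p
            * ((Ascaled A b x).mulVec v a * (Ascaled A b x).mulVec z a))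
        * (∑ b', Ascaled A b x b' q
            * ((Ascaled A b x).mulVec u b' * (Ascaled A b x).mulVec w b')) := by
    rw [swap1]
    exact Finset.sum_congr rfl fun q _ => Finset.sum_congr rfl fun p _ => by
      rw [hG p q]; ring
  rw [hsw]
  -- expand Rtensor on the left-hand side
  have e1 : ∀ k l i j : Fin n, Rtensor A b x k l i j * u i * v j * w l * z k
      = (1/4) * ((∑ p, ∑ q, (gmat A b x)⁻¹ p q
            * (phi3 A b x j k p * phi3 A b x i l q)) * u i * v j * w l * z k)
        - (1/4) * ((∑ p, ∑ q, (gmat A b x)⁻¹ p q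
            * (phi3 A b x i k p * phi3 A b x j l q)) * u i * v j * w l * z k) := by
    intro k l i j
    simp only [Rtensor, mul_sub, Finset.sum_sub_distrib]
    ring
  rw [Finset.sum_congr rfl fun k _ => Finset.sum_congr rfl fun l _ =>
    Finset.sum_congr rfl fun i _ => Finset.sum_congr rfl fun j _ => e1 k l i j]
  simp only [Finset.sum_sub_distrib, ← Finset.mul_sum]
  simp only [phi3]
  rw [half (Ascaled A b x) ((gmat A b x)⁻¹) u v w z]
  rw [swap3]
  have e2 : ∀ k l i j : Fin n,
      (∑ p, ∑ q, (gmat A b x)⁻¹ p q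
          * ((-2 * ∑ a, Ascaled A b x a j * Ascaled A b x a k * Ascaled A b x a p)
            * (-2 * ∑ a, Ascaled A b x a i * Ascaled A b x a l * Ascaled A b x a q)))
        * u j * v i * w l * z k
      = (∑ p, ∑ q, (gmat A b x)⁻¹ p q
          * ((-2 * ∑ a, Ascaled A b x a j * Ascaled A b x a k * Ascaled A b x a p)
            * (-2 * ∑ a, Ascaled A b x a i * Ascaled A b x a l * Ascaled A b x a q)))
        * v i * u j * w l * z k := fun k l i j => by ring
  rw [Finset.sum_congr rfl fun k _ => Finset.sum_congr rfl fun l _ =>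
    Finset.sum_congr rfl fun i _ => Finset.sum_congr rfl fun j _ => e2 k l i j]
  rw [half (Ascaled A b x) ((gmat A b x)⁻¹) v u w z]
  ring
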